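/- (Tensorization of entropy) Let (Ω_i, G_i, μ_i), i ≥ 1, be probability spaces and consider the product probability space (∏_{i=1}^∞ Ω_i, F, μ = ∏_{i=1}^∞ μ_i) where F is the product σ-algebra. Let X be a nonnegative F-measurable random variable with Ent_μ(X) well-defined (X and X log X integrable). Then Ent_μ(X) ≤ Σ_{i=1}^∞ E_μ[Ent_i(X)], where Ent_i(X) denotes the entropy of ω ↦ X(ω₁, ..., ω_i, ...) with respect to μ_i as a function of the i-th coordinate only, with all other coordinates held fixed. -/

import Mathlib

open MeasureTheory ProbabilityTheory
open scoped ENNReal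

/-- The entropy `Ent(Y) = E[Y log Y] − E[Y] log E[Y]` of a nonnegative random variable,
valued in `[0, ∞]`: it is `+∞` when `Y log Y` fails to be integrable. -/
noncomputable def entNN {Ω : Type*} [MeasurableSpace Ω] (μ : Measure Ω) (Y : Ω → ℝ) :
    ℝ≥0∞ :=
  open Classical in
  if Integrable (fun ω => Y ω * Real.log (Y ω)) μ then
    ENNReal.ofReal (∫ ω, Y ω * Real.log (Y ω) ∂μ
      - (∫ ω, Y ω ∂μ) * Real.log (∫ ω, Y ω ∂μ))
  else ∞

/-!
Identify `μ` with `Measure.infinitePi μi` through its values on boxes, and let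
`marginal μi S f` be the average of `f` over the coordinates in `S`, the conditional expectation
of `f` given the other coordinates. Write `φ t = t log t`. Averaging first over the coordinates
`> k` and then over the coordinate `k` lowers `E φ` by at most the expected entropy along `k`:
the entropy of a mixture is at most the mixture of the entropies, which follows from Gibbs'
inequality. Telescoping gives `E φ(E[X | 𝓕ₙ]) - φ(E X) ≤ ∑_{k ≤ n} E Entₖ(X)`, where `𝓕ₙ` is
generated by the first `n + 1` coordinates. By Lévy's upward theorem `E[X | 𝓕ₙ] → X` almost
surely, and Fatou's lemma (`φ ≥ -1`) carries the bound to the limit.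
-/

open Filter Topology Set Function Real

section RealIntegrals

variable {α : Type*} [MeasurableSpace α] {κ : Measure α}

lemma mul_log_integral_le_integral_mul_log [IsProbabilityMeasure κ] {u : α → ℝ}
    (hu : Integrable u κ) (hu0 : 0 ≤ᵐ[κ] u) (hφ : Integrable (fun y => u y * log (u y)) κ) :
    (∫ y, u y ∂κ) * log (∫ y, u y ∂κ) ≤ ∫ y, u y * log (u y) ∂κ :=
  convexOn_mul_log.map_integral_le continuous_mul_log.continuousOn isClosed_Ici hu0 hu hφ

lemma ofReal_integral_le_lintegral_ofReal {f : α → ℝ} (hf : Integrable f κ) :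
    ENNReal.ofReal (∫ x, f x ∂κ) ≤ ∫⁻ x, ENNReal.ofReal (f x) ∂κ := by
  rw [integral_eq_lintegral_pos_part_sub_lintegral_neg_part hf]
  exact (ENNReal.ofReal_le_ofReal (sub_le_self _ ENNReal.toReal_nonneg)).trans
    ENNReal.ofReal_toReal_le

lemma integral_le_of_tendsto_ae [IsProbabilityMeasure κ] {f : ℕ → α → ℝ} {g : α → ℝ}
    {c b : ℝ}
    (hf : ∀ n, Integrable (f n) κ) (hg : Integrable g κ) (hfc : ∀ n x, c ≤ f n x)
    (hlim : ∀ᵐ x ∂κ, Tendsto (fun n => f n x) atTop (𝓝 (g x)))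
    (hb : ∀ n, ∫ x, f n x ∂κ ≤ b) :
    ∫ x, g x ∂κ ≤ b := by
  have hgc : ∀ᵐ x ∂κ, c ≤ g x :=
    hlim.mono fun x hx => ge_of_tendsto' hx fun n => hfc n x
  have hcb : c ≤ b := by
    simpa using (integral_mono (integrable_const c) (hf 0) (hfc 0)).trans (hb 0)
  have hofReal : ∀ {h : α → ℝ}, Integrable h κ → (∀ᵐ x ∂κ, c ≤ h x) →
      ∫⁻ x, ENNReal.ofReal (h x - c) ∂κ = ENNReal.ofReal (∫ x, h x ∂κ - c) :=
    fun {h} hi hc => by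
      rw [← ofReal_integral_eq_lintegral_ofReal (f := fun x => h x - c)
        (hi.sub (integrable_const c)) (hc.mono fun x hx => sub_nonneg.2 hx),
        integral_sub hi (integrable_const c)]
      simp
  have hfatou : ENNReal.ofReal (∫ x, g x ∂κ - c) ≤ ENNReal.ofReal (b - c) := calc
    _ = ∫⁻ x, liminf (fun n => ENNReal.ofReal (f n x - c)) atTop ∂κ := by
      rw [← hofReal hg hgc]
      refine lintegral_congr_ae (hlim.mono fun x hx => ?_)
      exact ((ENNReal.continuous_ofReal.tendsto _).comp (hx.sub_const c)).liminf_eq.symm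
    _ ≤ liminf (fun n => ∫⁻ x, ENNReal.ofReal (f n x - c) ∂κ) atTop :=
      lintegral_liminf_le' fun n =>
        ((hf n).sub (integrable_const c)).aemeasurable.ennreal_ofReal
    _ ≤ ENNReal.ofReal (b - c) := by
      simp_rw [hofReal (hf _) (ae_of_all _ (hfc _))]
      exact liminf_le_of_frequently_le' (Frequently.of_forall fun n =>
        ENNReal.ofReal_le_ofReal (sub_le_sub_right (hb n) c))
  linarith [(ENNReal.ofReal_le_ofReal_iff (sub_nonneg.2 hcb)).1 hfatou]

end RealIntegrals

section Entropy

variable {α β γ : Type*} [MeasurableSpace α] [MeasurableSpace β] [MeasurableSpace γ]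
  {κ : Measure α}

lemma entNN_of_integrable {Y : α → ℝ} (h : Integrable (fun y => Y y * log (Y y)) κ) :
    entNN κ Y = ENNReal.ofReal (∫ y, Y y * log (Y y) ∂κ - (∫ y, Y y ∂κ) * log (∫ y, Y y ∂κ)) :=
  if_pos h

lemma entNN_of_not_integrable {Y : α → ℝ} (h : ¬Integrable (fun y => Y y * log (Y y)) κ) :
    entNN κ Y = ∞ :=
  if_neg h

lemma entNN_map {φ : α → γ} (hφ : Measurable φ) {Y : γ → ℝ} (hY : Measurable Y) :
    entNN (κ.map φ) Y = entNN κ (Y ∘ φ) := by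
  have hYlogY : Measurable fun y => Y y * log (Y y) := hY.mul hY.log
  unfold entNN
  rw [integrable_map_measure hYlogY.aestronglyMeasurable hφ.aemeasurable,
    integral_map hφ.aemeasurable hY.aestronglyMeasurable,
    integral_map hφ.aemeasurable hYlogY.aestronglyMeasurable]
  rfl

lemma measurable_entNN [SFinite κ] {G : β → α → ℝ} (hG : Measurable (uncurry G)) :
    Measurable fun z => entNN κ (G z) := by
  have hGlogG : StronglyMeasurable (uncurry fun z y => G z y * log (G z y)) :=
    (hG.mul hG.log).stronglyMeasurable
  have hE : Measurable fun z => ∫ y, G z y ∂κ :=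
    hG.stronglyMeasurable.integral_prod_right'.measurable
  exact Measurable.ite (measurableSet_integrable hGlogG)
    (ENNReal.measurable_ofReal.comp
      (hGlogG.integral_prod_right'.measurable.sub (hE.mul hE.log))) measurable_const

lemma mul_log_sub_mul_log_le {a b c : ℝ} (ha : 0 ≤ a) (hb : 0 ≤ b) (hc : 0 < c)
    (hab : b = 0 → a = 0) :
    a * log b - a * log a ≤ c * b - a - a * log c := by
  rcases ha.eq_or_lt with rfl | ha
  · simpa using mul_nonneg hc.le hb
  have hb : 0 < b := hb.lt_of_ne fun h => ha.ne' (hab h.symm)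
  have h := log_le_sub_one_of_pos (div_pos (mul_pos hc hb) ha)
  rw [log_div (by positivity) ha.ne', log_mul hc.ne' hb.ne'] at h
  have key : a * (log c + log b - log a) ≤ c * b - a := calc
    _ ≤ a * (c * b / a - 1) := mul_le_mul_of_nonneg_left h ha.le
    _ = c * b - a := by field_simp
  linarith [key]

/-- Gibbs' inequality: the relative entropy of `f / ∫ f` with respect to `h / ∫ h` is
nonnegative. -/
theorem gibbs_inequality {f h : α → ℝ} (hf0 : 0 ≤ᵐ[κ] f) (hh0 : 0 ≤ᵐ[κ] h)
    (hsupp : ∀ᵐ y ∂κ, h y = 0 → f y = 0) (hf : Integrable f κ) (hh : Integrable h κ)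
    (hflogf : Integrable (fun y => f y * log (f y)) κ)
    (hflogh : Integrable (fun y => f y * log (h y)) κ) (hEh : 0 < ∫ y, h y ∂κ) :
    ∫ y, f y * log (h y) ∂κ - (∫ y, f y ∂κ) * log (∫ y, h y ∂κ)
      ≤ ∫ y, f y * log (f y) ∂κ - (∫ y, f y ∂κ) * log (∫ y, f y ∂κ) := by
  rcases (integral_nonneg_of_ae hf0).eq_or_lt with hEf | hEf
  · have hf_ae : f =ᵐ[κ] 0 := (integral_eq_zero_iff_of_nonneg_ae hf0 hf).1 hEf.symm
    rw [← hEf, integral_eq_zero_of_ae (f := fun y => f y * log (h y))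
      (hf_ae.mono fun y (hy : f y = 0) => by simp [hy]),
      integral_eq_zero_of_ae (f := fun y => f y * log (f y))
      (hf_ae.mono fun y (hy : f y = 0) => by simp [hy])]
    simp
  set c := (∫ y, f y ∂κ) / ∫ y, h y ∂κ
  have hc : 0 < c := div_pos hEf hEh
  have hpt : ∀ᵐ y ∂κ, f y * log (h y) - f y * log (f y) ≤ c * h y - f y - f y * log c := by
    filter_upwards [hf0, hh0, hsupp] with y hfy hhy hy
    exact mul_log_sub_mul_log_le hfy hhy hc hy
  have hint := integral_mono_ae (f := fun y => f y * log (h y) - f y * log (f y))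
    (g := fun y => c * h y - f y - f y * log c) (hflogh.sub hflogf)
    (((hh.const_mul c).sub hf).sub (hf.mul_const _)) hpt
  rw [integral_sub hflogh hflogf,
    integral_sub (f := fun y => c * h y - f y) ((hh.const_mul c).sub hf) (hf.mul_const _),
    integral_sub (hh.const_mul c) hf, integral_const_mul, integral_mul_const,
    div_mul_cancel₀ _ hEh.ne', log_div hEf.ne' hEh.ne', mul_sub] at hint
  linarith

lemma integrable_mul_log_integral {ρ : Measure β} [SFinite ρ] [SFinite κ] {G : β → α → ℝ}
    (hGm : Measurable (uncurry G)) (hG : Integrable (uncurry G) (ρ.prod κ))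
    (hG0 : ∀ z y, 0 ≤ G z y)
    (hφ : Integrable (fun y => (∫ z, G z y ∂ρ) * log (∫ z, G z y ∂ρ)) κ) :
    Integrable (uncurry fun z y => G z y * log (∫ z', G z' y ∂ρ)) (ρ.prod κ) := by
  have hgm : Measurable fun y => ∫ z, G z y ∂ρ :=
    hGm.stronglyMeasurable.integral_prod_left'.measurable
  have hm : Measurable (uncurry fun z y => G z y * log (∫ z', G z' y ∂ρ)) :=
    hGm.mul (hgm.log.comp measurable_snd)
  refine (integrable_prod_iff' hm.aestronglyMeasurable).2
    ⟨hG.prod_left_ae.mono fun y hy => hy.mul_const (log (∫ z, G z y ∂ρ)),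
      hφ.norm.congr (ae_of_all _ fun y => ?_)⟩
  simp only [uncurry_apply_pair, norm_mul, Real.norm_eq_abs, abs_of_nonneg (hG0 _ y),
    integral_mul_const, abs_of_nonneg (integral_nonneg (f := (G · y)) (hG0 · y))]

lemma ae_ae_eq_zero_of_integral_eq_zero {ρ : Measure β} [SFinite ρ] [SFinite κ]
    {G : β → α → ℝ} (hGm : Measurable (uncurry G)) (hG : Integrable (uncurry G) (ρ.prod κ))
    (hG0 : ∀ z y, 0 ≤ G z y) :
    ∀ᵐ z ∂ρ, ∀ᵐ y ∂κ, ∫ z', G z' y ∂ρ = 0 → G z y = 0 := by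
  have hgm : Measurable fun y => ∫ z, G z y ∂ρ :=
    hGm.stronglyMeasurable.integral_prod_left'.measurable
  refine (Measure.ae_ae_comm ((measurableSet_eq_fun (hgm.comp measurable_snd)
    measurable_const).imp (measurableSet_eq_fun hGm measurable_const))).2
    (hG.prod_left_ae.mono fun y hy => ?_)
  by_cases h0 : ∫ z, G z y ∂ρ = 0
  · filter_upwards [(integral_eq_zero_iff_of_nonneg (hG0 · y) hy).1 h0] with z hz _ using hz
  · exact ae_of_all _ fun z h => (h0 h).elim

theorem entNN_integral_le_lintegral_entNN {ρ : Measure β} [SFinite ρ] [SFinite κ]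
    {G : β → α → ℝ} (hGm : Measurable (uncurry G)) (hG : Integrable (uncurry G) (ρ.prod κ))
    (hG0 : ∀ z y, 0 ≤ G z y)
    (hφ : Integrable (fun y => (∫ z, G z y ∂ρ) * log (∫ z, G z y ∂ρ)) κ) :
    entNN κ (fun y => ∫ z, G z y ∂ρ) ≤ ∫⁻ z, entNN κ (G z) ∂ρ := by
  rw [entNN_of_integrable hφ]
  set g : α → ℝ := fun y => ∫ z, G z y ∂ρ
  have hg0 : ∀ y, 0 ≤ g y := fun y => integral_nonneg fun z => hG0 z y
  have hgi : Integrable g κ := hG.integral_prod_right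
  rcases (integral_nonneg hg0 : 0 ≤ ∫ y, g y ∂κ).eq_or_lt with hEg | hEg
  · have hg_ae : g =ᵐ[κ] 0 := (integral_eq_zero_iff_of_nonneg hg0 hgi).1 hEg.symm
    rw [← hEg, integral_eq_zero_of_ae (f := fun y => g y * log (g y))
      (hg_ae.mono fun y (hy : g y = 0) => by simp [hy])]
    simp
  by_cases htop : ∫⁻ z, entNN κ (G z) ∂ρ = ∞
  · simp [htop]
  have hGlogG : ∀ᵐ z ∂ρ, Integrable (fun y => G z y * log (G z y)) κ := by
    filter_upwards [ae_lt_top' (measurable_entNN hGm).aemeasurable htop] with z hz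
    by_contra h
    simp [entNN_of_not_integrable h] at hz
  have hGlogg : Integrable (uncurry fun z y => G z y * log (g y)) (ρ.prod κ) :=
    integrable_mul_log_integral hGm hG hG0 hφ
  have hGlogg₁ : Integrable (fun z => ∫ y, G z y * log (g y) ∂κ) ρ :=
    hGlogg.integral_prod_left
  have hG₁ : Integrable (fun z => ∫ y, G z y ∂κ) ρ := hG.integral_prod_left
  have hent : ∫ y, g y * log (g y) ∂κ - (∫ y, g y ∂κ) * log (∫ y, g y ∂κ)
      = ∫ z, (∫ y, G z y * log (g y) ∂κ - (∫ y, G z y ∂κ) * log (∫ y, g y ∂κ)) ∂ρ := by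
    rw [integral_sub hGlogg₁ (hG₁.mul_const _),
      integral_mul_const, integral_integral_swap hGlogg, integral_integral_swap hG]
    simp_rw [integral_mul_const]
    rfl
  rw [hent]
  refine (ofReal_integral_le_lintegral_ofReal (hGlogg₁.sub (hG₁.mul_const _))).trans
    (lintegral_mono_ae ?_)
  filter_upwards [hG.prod_right_ae, hGlogg.prod_right_ae, hGlogG,
    ae_ae_eq_zero_of_integral_eq_zero hGm hG hG0] with z hGz hGzlogg hGzlogG hz
  rw [entNN_of_integrable hGzlogG]
  exact ENNReal.ofReal_le_ofReal (gibbs_inequality (ae_of_all _ (hG0 z)) (ae_of_all _ hg0) hz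
    hGz hgi hGzlogG hGzlogg hEg)

end Entropy

theorem MeasureTheory.MeasurePreserving.integral_comp_of_aestronglyMeasurable
    {α β E : Type*} [MeasurableSpace α] [MeasurableSpace β] [NormedAddCommGroup E]
    [NormedSpace ℝ E] {μ : Measure α} {ν : Measure β} {f : α → β} (hf : MeasurePreserving f μ ν)
    {g : β → E} (hg : AEStronglyMeasurable g ν) :
    ∫ x, g (f x) ∂μ = ∫ y, g y ∂ν := by
  rw [← hf.map_eq] at hg ⊢
  exact (integral_map hf.measurable.aemeasurable hg).symm

section Marginal

/- Identities between `piecewise` terms are proved in place: stated as lemmas, they would carry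
decidability instances other than the classical ones used by `marginal`. -/
open Measure Classical

variable {ι : Type*} {Ω : ι → Type*} [∀ i, MeasurableSpace (Ω i)]
  (μ : ∀ i, Measure (Ω i)) (S T : Set ι)
  {f : (∀ i, Ω i) → ℝ}

lemma measurable_piecewise_prod :
    Measurable fun p : (∀ i, Ω i) × (∀ i, Ω i) => S.piecewise p.1 p.2 := by
  refine measurable_pi_lambda _ fun i => ?_
  by_cases hi : i ∈ S
  · simp only [piecewise_eq_of_mem _ _ _ hi]
    fun_prop
  · simp only [piecewise_eq_of_notMem _ _ _ hi]
    fun_prop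

/-- A version of the conditional expectation of `f` given the coordinates outside `S`. -/
noncomputable def marginal (f : (∀ i, Ω i) → ℝ) (τ : ∀ i, Ω i) : ℝ :=
  ∫ σ, f (S.piecewise σ τ) ∂infinitePi μ

variable {μ S T}

lemma marginal_nonneg (hf : ∀ ω, 0 ≤ f ω) (τ : ∀ i, Ω i) : 0 ≤ marginal μ S f τ :=
  integral_nonneg fun _ => hf _

lemma marginal_univ (τ : ∀ i, Ω i) : marginal μ univ f τ = ∫ ω, f ω ∂infinitePi μ := by
  simp [marginal]

variable (μ S) [∀ i, IsProbabilityMeasure (μ i)]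

theorem measurePreserving_piecewise :
    MeasurePreserving (fun p : (∀ i, Ω i) × (∀ i, Ω i) => S.piecewise p.1 p.2)
      ((infinitePi μ).prod (infinitePi μ)) (infinitePi μ) := by
  refine ⟨measurable_piecewise_prod S, eq_infinitePi _ fun s A hA => ?_⟩
  have hpre : (fun p : (∀ i, Ω i) × (∀ i, Ω i) => S.piecewise p.1 p.2) ⁻¹' Set.pi s A
      = Set.pi ↑(s.filter (· ∈ S)) A ×ˢ Set.pi ↑(s.filter (· ∉ S)) A := by
    ext p
    simp only [mem_preimage, Set.mem_pi, mem_prod, Finset.coe_filter]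
    refine ⟨fun h => ⟨fun i hi => ?_, fun i hi => ?_⟩, fun h i hi => ?_⟩
    · simpa [piecewise_eq_of_mem _ _ _ hi.2] using h i hi.1
    · simpa [piecewise_eq_of_notMem _ _ _ hi.2] using h i hi.1
    · by_cases hiS : i ∈ S
      · simpa [piecewise_eq_of_mem _ _ _ hiS] using h.1 i ⟨hi, hiS⟩
      · simpa [piecewise_eq_of_notMem _ _ _ hiS] using h.2 i ⟨hi, hiS⟩
  rw [map_apply (measurable_piecewise_prod S) (.pi s.countable_toSet fun i _ => hA i), hpre,
    prod_prod, infinitePi_pi _ fun i _ => hA i, infinitePi_pi _ fun i _ => hA i,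
    Finset.prod_filter_mul_prod_filter_not]

lemma measurePreserving_piecewise_swap :
    MeasurePreserving (fun p : (∀ i, Ω i) × (∀ i, Ω i) => S.piecewise p.2 p.1)
      ((infinitePi μ).prod (infinitePi μ)) (infinitePi μ) :=
  (measurePreserving_piecewise μ S).comp measurePreserving_swap

variable {μ S}

lemma measurable_marginal (hf : Measurable f) : Measurable (marginal μ S f) :=
  (hf.comp (measurable_piecewise_prod S)).stronglyMeasurable.integral_prod_left'.measurable

lemma integrable_comp_piecewise (hf : Integrable f (infinitePi μ)) :
    Integrable (fun p : (∀ i, Ω i) × (∀ i, Ω i) => f (S.piecewise p.1 p.2))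
      ((infinitePi μ).prod (infinitePi μ)) :=
  (measurePreserving_piecewise μ S).integrable_comp_of_integrable hf

lemma ae_integrable_comp_piecewise (hf : Integrable f (infinitePi μ)) :
    ∀ᵐ τ ∂infinitePi μ, Integrable (fun σ => f (S.piecewise σ τ)) (infinitePi μ) :=
  (integrable_comp_piecewise hf).prod_left_ae

lemma integrable_marginal (hf : Integrable f (infinitePi μ)) :
    Integrable (marginal μ S f) (infinitePi μ) :=
  (integrable_comp_piecewise hf).integral_prod_right

lemma integral_marginal (hf : Integrable f (infinitePi μ)) :
    ∫ τ, marginal μ S f τ ∂infinitePi μ = ∫ ω, f ω ∂infinitePi μ := by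
  rw [← (measurePreserving_piecewise μ S).integral_comp_of_aestronglyMeasurable
    hf.aestronglyMeasurable, integral_prod_symm _ (integrable_comp_piecewise hf)]
  rfl

lemma lintegral_lintegral_piecewise {g : (∀ i, Ω i) → ℝ≥0∞} (hg : Measurable g) :
    ∫⁻ τ, ∫⁻ σ, g (S.piecewise σ τ) ∂infinitePi μ ∂infinitePi μ = ∫⁻ ω, g ω ∂infinitePi μ := by
  rw [← lintegral_prod_symm' (fun p => g (S.piecewise p.1 p.2))
      (hg.comp (measurable_piecewise_prod S)),
    (measurePreserving_piecewise μ S).lintegral_comp hg]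

lemma marginal_marginal (hfi : Integrable f (infinitePi μ)) :
    marginal μ T (marginal μ S f) =ᵐ[infinitePi μ] marginal μ (S ∪ T) f := by
  filter_upwards [ae_integrable_comp_piecewise (S := S ∪ T) hfi] with τ hτ
  have hswap := measurePreserving_piecewise_swap μ S
  have h := hswap.integral_comp_of_aestronglyMeasurable hτ.aestronglyMeasurable
  have hint := hswap.integrable_comp_of_integrable hτ
  rw [comp_def] at hint
  rw [integral_prod _ hint] at h
  refine (integral_congr_ae (ae_of_all _ fun σ =>
    integral_congr_ae (ae_of_all _ fun σ' => ?_))).trans h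
  congr 1
  ext i
  by_cases hS : i ∈ S <;> by_cases hT : i ∈ T <;> simp [Set.piecewise, hS, hT]

end Marginal

section Step

open Measure Classical

variable {ι : Type*} {Ω : ι → Type*} [∀ i, MeasurableSpace (Ω i)]
  {μ : ∀ i, Measure (Ω i)} [∀ i, IsProbabilityMeasure (μ i)] {S T : Set ι}
  {f : (∀ i, Ω i) → ℝ}

lemma integrable_mul_log_marginal (hf : Measurable f) (hf0 : ∀ ω, 0 ≤ f ω)
    (hfi : Integrable f (infinitePi μ))
    (hflogf : Integrable (fun ω => f ω * log (f ω)) (infinitePi μ)) :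
    Integrable (fun τ => marginal μ S f τ * log (marginal μ S f τ)) (infinitePi μ) := by
  have hm := measurable_marginal (μ := μ) (S := S) hf
  refine Integrable.mono' ((integrable_marginal (S := S) hflogf).abs.add (integrable_const 1))
    (hm.mul hm.log).aestronglyMeasurable ?_
  filter_upwards [ae_integrable_comp_piecewise (S := S) hfi,
    ae_integrable_comp_piecewise (S := S) hflogf] with τ hτ hτlog
  have hlow := self_sub_one_le_mul_log (marginal_nonneg (μ := μ) (S := S) hf0 τ)
  have hup : marginal μ S f τ * log (marginal μ S f τ)
      ≤ marginal μ S (fun ω => f ω * log (f ω)) τ :=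
    mul_log_integral_le_integral_mul_log hτ (ae_of_all _ fun σ => hf0 _) hτlog
  have habs := abs_le.1 (le_refl |marginal μ S (fun ω => f ω * log (f ω)) τ|)
  rw [Real.norm_eq_abs, abs_le, Pi.add_apply]
  constructor <;> linarith [marginal_nonneg (μ := μ) (S := S) hf0 τ]

lemma measurable_piecewise_piecewise (S T : Set ι) (τ : ∀ i, Ω i) :
    Measurable fun p : (∀ i, Ω i) × (∀ i, Ω i) => T.piecewise p.2 (S.piecewise p.1 τ) :=
  (measurable_piecewise_prod T).comp (measurable_snd.prodMk
    ((measurable_piecewise_prod S).comp (measurable_fst.prodMk measurable_const)))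

lemma entNN_marginal_piecewise_le (hST : Disjoint S T) (hf : Measurable f)
    (hf0 : ∀ ω, 0 ≤ f ω) {τ : ∀ i, Ω i}
    (hfτ : Integrable (uncurry fun z σ => f (T.piecewise σ (S.piecewise z τ)))
      ((infinitePi μ).prod (infinitePi μ)))
    (hlogτ : Integrable (fun σ => marginal μ S f (T.piecewise σ τ)
      * log (marginal μ S f (T.piecewise σ τ))) (infinitePi μ)) :
    entNN (infinitePi μ) (fun σ => marginal μ S f (T.piecewise σ τ))
      ≤ ∫⁻ z, entNN (infinitePi μ) (fun σ => f (T.piecewise σ (S.piecewise z τ)))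
        ∂infinitePi μ := by
  have hcomm : ∀ σ, marginal μ S f (T.piecewise σ τ)
      = ∫ z, f (T.piecewise σ (S.piecewise z τ)) ∂infinitePi μ := fun σ => by
    refine integral_congr_ae (ae_of_all _ fun z => congrArg f ?_)
    ext i
    by_cases hS : i ∈ S <;> by_cases hT : i ∈ T <;> simp [Set.piecewise, hS, hT]
    exact (hST.notMem_of_mem_left hS hT).elim
  simp only [hcomm] at hlogτ ⊢
  exact entNN_integral_le_lintegral_entNN (measurable_piecewise_piecewise S T τ |> hf.comp)
    hfτ (fun _ _ => hf0 _) hlogτ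

theorem ofReal_integral_mul_log_marginal_sub_le (hST : Disjoint S T) (hf : Measurable f)
    (hf0 : ∀ ω, 0 ≤ f ω) (hfi : Integrable f (infinitePi μ))
    (hflogf : Integrable (fun ω => f ω * log (f ω)) (infinitePi μ)) :
    ENNReal.ofReal (∫ τ, marginal μ S f τ * log (marginal μ S f τ) ∂infinitePi μ
        - ∫ τ, marginal μ (S ∪ T) f τ * log (marginal μ (S ∪ T) f τ) ∂infinitePi μ)
      ≤ ∫⁻ ω, entNN (infinitePi μ) (fun σ => f (T.piecewise σ ω)) ∂infinitePi μ := by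
  have hDlog := integrable_mul_log_marginal (S := S) hf hf0 hfi hflogf
  have hTlog := integrable_mul_log_marginal (S := T) (measurable_marginal hf)
    (marginal_nonneg hf0) (integrable_marginal hfi) hDlog
  have hintS : ∫ τ, marginal μ S f τ * log (marginal μ S f τ) ∂infinitePi μ
      = ∫ τ, marginal μ T (fun ω => marginal μ S f ω * log (marginal μ S f ω)) τ
        ∂infinitePi μ :=
    (integral_marginal hDlog).symm
  have hintST : ∫ τ, marginal μ (S ∪ T) f τ * log (marginal μ (S ∪ T) f τ) ∂infinitePi μ
      = ∫ τ, marginal μ T (marginal μ S f) τ * log (marginal μ T (marginal μ S f) τ)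
        ∂infinitePi μ :=
    integral_congr_ae ((marginal_marginal (S := S) (T := T) hfi).mono fun τ h => by
      simp only [h])
  rw [hintS, hintST, ← integral_sub (integrable_marginal hDlog) hTlog,
    ← lintegral_lintegral_piecewise (S := S)
      (measurable_entNN (G := fun ω σ => f (T.piecewise σ ω))
        (hf.comp ((measurable_piecewise_prod T).comp measurable_swap)))]
  refine (ofReal_integral_le_lintegral_ofReal ((integrable_marginal hDlog).sub hTlog)).trans
    (lintegral_mono_ae ?_)
  filter_upwards [ae_integrable_comp_piecewise (S := T) hDlog,
    ae_integrable_comp_piecewise (S := S ∪ T) hfi] with τ hlogτ hfτ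
  have hjoint := (measurePreserving_piecewise_swap μ T).integrable_comp_of_integrable hfτ
  refine (entNN_of_integrable hlogτ).symm.le.trans
    (entNN_marginal_piecewise_le hST hf hf0 (hjoint.congr (ae_of_all _ fun p => ?_)) hlogτ)
  simp only [comp_apply, uncurry]
  congr 1
  ext i
  by_cases hS : i ∈ S <;> by_cases hT : i ∈ T <;> simp [Set.piecewise, hS, hT]

-- The decidability instance is implicit so that it unifies with the classical one of `marginal`.
lemma entNN_piecewise_singleton [DecidableEq ι] (k : ι) {_ : DecidablePred (· ∈ ({k} : Set ι))}
    (hf : Measurable f) (ω : ∀ i, Ω i) :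
    entNN (infinitePi μ) (fun σ => f (({k} : Set ι).piecewise σ ω))
      = entNN (μ k) (fun y => f (update ω k y)) := by
  rw [← infinitePi_map_eval μ k, entNN_map (Y := fun y => f (update ω k y))
    (measurable_pi_apply k) (hf.comp (measurable_update ω))]
  congr 1
  ext σ
  congr 1
  ext j
  by_cases hj : j = k
  · subst hj
    simp
  · simp [hj]

end Step

section CondExp

open Measure Classical

variable {ι : Type*} {Ω : ι → Type*} [∀ i, MeasurableSpace (Ω i)]
  {μ : ∀ i, Measure (Ω i)} [∀ i, IsProbabilityMeasure (μ i)] {f : (∀ i, Ω i) → ℝ}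

lemma stronglyMeasurable_marginal_compl (K : Set ι) (hf : Measurable f) :
    StronglyMeasurable[MeasurableSpace.comap K.domRestrict MeasurableSpace.pi]
      (marginal μ Kᶜ f) := by
  have ω₀ : ∀ i, Ω i := fun i => (nonempty_of_isProbabilityMeasure (μ i)).some
  have hproj : Measurable[MeasurableSpace.comap K.domRestrict MeasurableSpace.pi]
      fun τ : ∀ i, Ω i => Kᶜ.piecewise ω₀ τ := by
    refine @measurable_pi_lambda _ _ _
      (MeasurableSpace.comap K.domRestrict MeasurableSpace.pi) _ _ fun j => ?_
    by_cases hj : j ∈ K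
    · simp only [piecewise_eq_of_notMem _ _ _ (show j ∉ Kᶜ from not_not_intro hj)]
      exact (measurable_pi_apply (⟨j, hj⟩ : K)).comp (comap_measurable K.domRestrict)
    · simp only [piecewise_eq_of_mem _ _ _ (show j ∈ Kᶜ from hj)]
      exact measurable_const
  have hfactor : marginal μ Kᶜ f = marginal μ Kᶜ f ∘ fun τ => Kᶜ.piecewise ω₀ τ := by
    ext τ
    refine integral_congr_ae (ae_of_all _ fun σ => congrArg f ?_)
    ext i
    by_cases hK : i ∈ K <;> simp [Set.piecewise, hK]
  rw [hfactor]
  exact ((measurable_marginal hf).comp hproj).stronglyMeasurable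

theorem marginal_compl_ae_eq_condExp (K : Set ι) (hf : Measurable f)
    (hfi : Integrable f (infinitePi μ)) :
    marginal μ Kᶜ f =ᵐ[infinitePi μ]
      (infinitePi μ)[f | MeasurableSpace.comap K.domRestrict MeasurableSpace.pi] := by
  have hle : MeasurableSpace.comap K.domRestrict MeasurableSpace.pi
      ≤ (MeasurableSpace.pi : MeasurableSpace (∀ i, Ω i)) :=
    (measurable_pi_lambda _ fun _ => measurable_pi_apply _).comap_le
  refine ae_eq_condExp_of_forall_setIntegral_eq hle hfi
    (fun s _ _ => (integrable_marginal hfi).integrableOn) ?_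
    (stronglyMeasurable_marginal_compl K hf).aestronglyMeasurable
  rintro _ ⟨t, ht, rfl⟩ -
  have hs : MeasurableSet (K.domRestrict ⁻¹' t) := hle _ ⟨t, ht, rfl⟩
  have hind : (K.domRestrict ⁻¹' t).indicator (marginal μ Kᶜ f)
      = marginal μ Kᶜ ((K.domRestrict ⁻¹' t).indicator f) := by
    ext τ
    have hK : ∀ {_ : ∀ j, Decidable (j ∈ Kᶜ)} (σ : ∀ i, Ω i),
        K.domRestrict (Kᶜ.piecewise σ τ) = K.domRestrict τ := fun σ => by
      ext ⟨j, hj⟩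
      exact piecewise_eq_of_notMem _ _ _ (show j ∉ Kᶜ from not_not_intro hj)
    by_cases hτ : K.domRestrict τ ∈ t <;>
      simp only [indicator, marginal, mem_preimage, hK, hτ, if_true, if_false, integral_zero]
  rw [← integral_indicator hs, ← integral_indicator hs, hind,
    integral_marginal (hfi.indicator hs)]

end CondExp

section Nat

open Measure Classical Preorder

variable {Ω : ℕ → Type*} [∀ i, MeasurableSpace (Ω i)] {μ : ∀ i, Measure (Ω i)}
  [∀ i, IsProbabilityMeasure (μ i)] {f : (∀ i, Ω i) → ℝ}

lemma pi_le_iSup_piLE :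
    (MeasurableSpace.pi : MeasurableSpace (∀ i, Ω i)) ≤ ⨆ n, Filtration.piLE (X := Ω) n := by
  have h : Measurable[⨆ n, Filtration.piLE (X := Ω) n, MeasurableSpace.pi] id :=
    @measurable_pi_lambda _ _ _ (⨆ n, Filtration.piLE (X := Ω) n) _ _ fun i =>
      ((measurable_pi_apply (⟨i, self_mem_Iic⟩ : Iic i)).comp
        (comap_measurable (restrictLe i))).mono (le_iSup (Filtration.piLE (X := Ω)) i) le_rfl
  exact fun s hs => h hs

theorem tendsto_marginal_compl_Iic (hf : Measurable f) (hfi : Integrable f (infinitePi μ)) :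
    ∀ᵐ ω ∂infinitePi μ, Tendsto (fun n => marginal μ (Iic n)ᶜ f ω) atTop (𝓝 (f ω)) := by
  have hcond : ∀ n, marginal μ (Iic n)ᶜ f =ᵐ[infinitePi μ]
      (infinitePi μ)[f | Filtration.piLE n] := fun n =>
    marginal_compl_ae_eq_condExp (Iic n) hf hfi
  filter_upwards [hfi.tendsto_ae_condExp (hf.stronglyMeasurable.mono pi_le_iSup_piLE),
    ae_all_iff.2 hcond] with ω hlim hω
  simpa only [hω] using hlim

theorem ofReal_integral_mul_log_marginal_sub_le_sum (hf : Measurable f) (hf0 : ∀ ω, 0 ≤ f ω)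
    (hfi : Integrable f (infinitePi μ))
    (hflogf : Integrable (fun ω => f ω * log (f ω)) (infinitePi μ)) (n : ℕ) :
    ENNReal.ofReal
        (∫ τ, marginal μ (Iio n)ᶜ f τ * log (marginal μ (Iio n)ᶜ f τ) ∂infinitePi μ
          - (∫ ω, f ω ∂infinitePi μ) * log (∫ ω, f ω ∂infinitePi μ))
      ≤ ∑ k ∈ Finset.range n,
          ∫⁻ ω, entNN (μ k) (fun y => f (update ω k y)) ∂infinitePi μ := by
  set F : ℕ → ℝ := fun k =>
    ∫ τ, marginal μ (Iio k)ᶜ f τ * log (marginal μ (Iio k)ᶜ f τ) ∂infinitePi μ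
  have hF0 : F 0 = (∫ ω, f ω ∂infinitePi μ) * log (∫ ω, f ω ∂infinitePi μ) := by
    simp [F, marginal_univ]
  rw [← hF0, ← Finset.sum_range_sub F n]
  refine (Finset.le_sum_of_subadditive ENNReal.ofReal ENNReal.ofReal_zero.le
    (fun _ _ => ENNReal.ofReal_add_le) _ _).trans (Finset.sum_le_sum fun k _ => ?_)
  have hstep := ofReal_integral_mul_log_marginal_sub_le (S := (Iio (k + 1))ᶜ) (T := {k})
    (disjoint_singleton_right.2 (by simp)) hf hf0 hfi hflogf
  rw [show (Iio (k + 1))ᶜ ∪ {k} = (Iio k)ᶜ by ext j; simp; omega] at hstep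
  simpa only [entNN_piecewise_singleton k hf] using hstep

end Nat

theorem entropy_tensorization_general
    {Ω : ℕ → Type} [∀ i, MeasurableSpace (Ω i)]
    (μi : ∀ i, Measure (Ω i)) [∀ i, IsProbabilityMeasure (μi i)]
    (μ : Measure (∀ i, Ω i))
    (hprod : ∀ (s : Finset ℕ) (A : ∀ i, Set (Ω i)), (∀ i, MeasurableSet (A i)) →
      μ (Set.pi ↑s A) = ∏ i ∈ s, μi i (A i))
    (X : (∀ i, Ω i) → ℝ) (hXmeas : Measurable X) (hXpos : ∀ ω, 0 ≤ X ω)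
    (hXint : Integrable X μ)
    (hXlogint : Integrable (fun ω => X ω * Real.log (X ω)) μ) :
    ENNReal.ofReal (∫ ω, X ω * Real.log (X ω) ∂μ
        - (∫ ω, X ω ∂μ) * Real.log (∫ ω, X ω ∂μ))
      ≤ ∑' i : ℕ, ∫⁻ ω, entNN (μi i) (fun y => X (Function.update ω i y)) ∂μ := by
  obtain rfl : μ = Measure.infinitePi μi := Measure.eq_infinitePi μi hprod
  set P := Measure.infinitePi μi
  set T := ∑' i : ℕ, ∫⁻ ω, entNN (μi i) (fun y => X (update ω i y)) ∂P
  by_cases hT : T = ∞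
  · simp [hT]
  have hbound : ∀ n,
      ∫ τ, marginal μi (Iic n)ᶜ X τ * log (marginal μi (Iic n)ᶜ X τ) ∂P
        ≤ (∫ ω, X ω ∂P) * log (∫ ω, X ω ∂P) + T.toReal := fun n => by
    have h := (ofReal_integral_mul_log_marginal_sub_le_sum hXmeas hXpos hXint hXlogint
      (n + 1)).trans (ENNReal.sum_le_tsum _)
    rw [show Iio (n + 1) = Iic n by ext; simp] at h
    linarith [(ENNReal.ofReal_le_iff_le_toReal hT).1 h]
  have hX := integral_le_of_tendsto_ae (c := -1)
    (fun n => integrable_mul_log_marginal hXmeas hXpos hXint hXlogint) hXlogint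
    (fun n τ => by
      have hM := marginal_nonneg (μ := μi) (S := (Iic n)ᶜ) hXpos τ
      linarith [self_sub_one_le_mul_log hM])
    ((tendsto_marginal_compl_Iic hXmeas hXint).mono fun ω h =>
      (continuous_mul_log.tendsto _).comp h) hbound
  exact ENNReal.ofReal_le_of_le_toReal (by linarith)

/-- **Tensorization of entropy.**
Let `(Ωᵢ, μᵢ)` be probability spaces and let `μ` be the product measure `∏ᵢ μᵢ` on
`∏ᵢ Ωᵢ` (characterized by its values on measurable cylinders). If `X ≥ 0` is measurable
with `X` and `X log X` integrable, then `Ent_μ(X) ≤ ∑ᵢ E_μ[Entᵢ(X)]`, where `Entᵢ(X)`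
is the entropy of `X` with respect to `μᵢ` as a function of the `i`-th coordinate only,
all other coordinates being held fixed. -/
theorem entropy_tensorization
    {Ω : ℕ → Type} [∀ i, MeasurableSpace (Ω i)]
    (μi : ∀ i, Measure (Ω i)) [∀ i, IsProbabilityMeasure (μi i)]
    (μ : Measure (∀ i, Ω i)) [IsProbabilityMeasure μ]
    (hprod : ∀ (s : Finset ℕ) (A : ∀ i, Set (Ω i)), (∀ i, MeasurableSet (A i)) →
      μ (Set.pi ↑s A) = ∏ i ∈ s, μi i (A i))
    (X : (∀ i, Ω i) → ℝ) (hXmeas : Measurable X) (hXpos : ∀ ω, 0 ≤ X ω)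
    (hXint : Integrable X μ)
    (hXlogint : Integrable (fun ω => X ω * Real.log (X ω)) μ) :
    ENNReal.ofReal (∫ ω, X ω * Real.log (X ω) ∂μ
        - (∫ ω, X ω ∂μ) * Real.log (∫ ω, X ω ∂μ))
      ≤ ∑' i : ℕ, ∫⁻ ω, entNN (μi i) (fun y => X (Function.update ω i y)) ∂μ :=
  entropy_tensorization_general μi μ hprod X hXmeas hXpos hXint hXlogint
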